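/- Let X_1, …, X_k be independent random variables each exponentially distributed with rate 1 (density e^{−x} on [0,∞)), and let w_1, …, w_k be pairwise distinct positive real numbers. Then for every V ≥ 0, the right-tail probability satisfies P(∑_{i=1}^k w_i X_i ≥ V) = ∑_{i=1}^{k} w_i^{k−1} e^{−V/w_i} / ∏_{j≠i} (w_i − w_j). -/

import Mathlib

open MeasureTheory ProbabilityTheory

namespace WSE

open Real Set Polynomial
open scoped ENNReal


noncomputable instance : IsProbabilityMeasure (expMeasure 1) :=
  isProbabilityMeasure_expMeasure one_pos

lemma expMeasure_Ici {c : ℝ} (hc : 0 ≤ c) :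
    expMeasure 1 (Set.Ici c) = ENNReal.ofReal (Real.exp (-c)) := by
  have h1 : expMeasure 1 = volume.withDensity (exponentialPDF 1) := rfl
  rw [h1, withDensity_apply _ measurableSet_Ici]
  have h2 : ∀ x ∈ Set.Ici c, exponentialPDF 1 x = ENNReal.ofReal (Real.exp (-x)) := by
    intro x hx
    rw [exponentialPDF_of_nonneg (hc.trans hx)]
    norm_num
  rw [setLIntegral_congr_fun measurableSet_Ici h2]
  have hIoi : (Set.Ici c : Set ℝ) =ᵐ[volume] Set.Ioi c := (Ioi_ae_eq_Ici (a := c)).symm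
  rw [setLIntegral_congr hIoi, ← ofReal_integral_eq_lintegral_ofReal]
  · rw [integral_exp_neg_Ioi]
  · simpa [IntegrableOn] using exp_neg_integrableOn_Ioi c one_pos
  · exact Filter.Eventually.of_forall fun x => (exp_pos _).le

lemma lagrange_identity {n : ℕ} (v : Fin (n + 1) → ℝ) (hv : Function.Injective v) :
    ∑ i, v i ^ n / ∏ j ∈ Finset.univ.erase i, (v i - v j) = 1 := by
  classical
  set s : Finset (Fin (n + 1)) := Finset.univ with hs
  have hvs : Set.InjOn v s := fun a _ b _ h => hv h
  have hcard : s.card = n + 1 := by simp [hs]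
  have hdeg : (X ^ n : ℝ[X]).degree < (s.card : ℕ) := by
    rw [degree_X_pow, hcard]
    exact_mod_cast Nat.lt_succ_self n
  have h := Lagrange.eq_interpolate hvs hdeg
  have hcoeff := congrArg (fun p : ℝ[X] => p.coeff n) h
  simp only [coeff_X_pow, if_pos rfl] at hcoeff
  rw [Lagrange.interpolate_apply, Polynomial.finset_sum_coeff] at hcoeff
  have hbasis : ∀ i ∈ s, (C (eval (v i) (X ^ n : ℝ[X])) * Lagrange.basis s v i).coeff n
      = v i ^ n * Lagrange.nodalWeight s v i := by
    intro i hi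
    rw [Lagrange.basis_eq_prod_sub_inv_mul_nodal_div hi,
      ← Lagrange.nodal_erase_eq_nodal_div hi, ← mul_assoc, ← C_mul, coeff_C_mul]
    have hmon : (Lagrange.nodal (s.erase i) v).Monic := Lagrange.nodal_monic
    have hnd : (Lagrange.nodal (s.erase i) v).natDegree = n := by
      rw [Lagrange.natDegree_nodal, Finset.card_erase_of_mem hi, hcard]
      omega
    have hc1 : (Lagrange.nodal (s.erase i) v).coeff n = 1 := by
      have := hmon.coeff_natDegree
      rwa [hnd] at this
    rw [hc1, eval_pow, eval_X]
    ring
  rw [Finset.sum_congr rfl hbasis] at hcoeff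
  have hterm : ∀ i ∈ s, v i ^ n / ∏ j ∈ s.erase i, (v i - v j)
      = v i ^ n * Lagrange.nodalWeight s v i := by
    intro i _
    rw [Lagrange.nodalWeight, div_eq_mul_inv, ← Finset.prod_inv_distrib]
  rw [Finset.sum_congr rfl hterm, ← hcoeff, if_pos trivial]

lemma prod_erase_zero {n : ℕ} (g : Fin (n + 2) → ℝ) :
    ∏ j ∈ Finset.univ.erase 0, g j = ∏ j : Fin (n + 1), g j.succ := by
  have h : (Finset.univ.erase (0 : Fin (n + 2))) = Finset.univ.image Fin.succ := by
    ext j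
    rcases Fin.eq_zero_or_eq_succ j with h | ⟨j', rfl⟩
    · simp [h]
    · simp [Fin.succ_ne_zero]
  rw [h, Finset.prod_image (fun a _ b _ h => Fin.succ_injective _ h)]

lemma prod_erase_succ {n : ℕ} (g : Fin (n + 2) → ℝ) (i : Fin (n + 1)) :
    ∏ j ∈ Finset.univ.erase i.succ, g j = g 0 * ∏ j ∈ Finset.univ.erase i, g j.succ := by
  have hset : Finset.univ.erase i.succ
      = insert (0 : Fin (n+2)) ((Finset.univ.erase i).image Fin.succ) := by
    ext j
    rcases Fin.eq_zero_or_eq_succ j with h | ⟨j', rfl⟩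
    · simp [h, (Fin.succ_ne_zero i).symm]
    · simp [Fin.succ_ne_zero, (Fin.succ_injective _).eq_iff]
  rw [hset, Finset.prod_insert (by simp [Fin.succ_ne_zero, eq_comm]),
    Finset.prod_image (fun a _ b _ h => Fin.succ_injective _ h)]

lemma measurableSet_tail {m : ℕ} (w : Fin m → ℝ) (V : ℝ) :
    MeasurableSet {x : Fin m → ℝ | V ≤ ∑ i, w i * x i} :=
  measurableSet_le measurable_const
    (Finset.measurable_sum _ fun i _ => (measurable_pi_apply (X := fun _ : Fin m => ℝ) i).const_mul (w i))

lemma tail_nonpos {n : ℕ} (w : Fin n → ℝ) (hw : ∀ i, 0 ≤ w i) {V : ℝ} (hV : V ≤ 0) :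
    (Measure.pi fun _ : Fin n => expMeasure 1) {x | V ≤ ∑ i, w i * x i} = 1 := by
  have hsub : Set.pi Set.univ (fun _ : Fin n => Set.Ici (0:ℝ))
      ⊆ {x | V ≤ ∑ i, w i * x i} := by
    intro x hx
    have h0 : 0 ≤ ∑ i, w i * x i :=
      Finset.sum_nonneg fun i _ => mul_nonneg (hw i) (hx i (Set.mem_univ i))
    exact hV.trans h0
  refine le_antisymm prob_le_one ?_
  calc (1:ℝ≥0∞) = (Measure.pi fun _ : Fin n => expMeasure 1)
        (Set.pi Set.univ fun _ => Set.Ici 0) := by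
        rw [Measure.pi_pi]
        simp [expMeasure_Ici le_rfl]
    _ ≤ _ := measure_mono hsub

lemma expint (t₀ : ℝ) (b : ℝ) (hb : b ≠ 0) :
    ∫ t in (0:ℝ)..t₀, Real.exp (b * t) = (Real.exp (b * t₀) - 1) / b := by
  have hder : ∀ x ∈ uIcc (0:ℝ) t₀,
      HasDerivAt (fun t => Real.exp (b * t) / b) (Real.exp (b * x)) x := by
    intro x _
    have h1 : HasDerivAt (fun t : ℝ => b * t) b x := by
      simpa using (hasDerivAt_id x).const_mul b
    have h2 := (h1.exp).div_const b
    simpa [mul_div_cancel_right₀ _ hb] using h2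
  rw [intervalIntegral.integral_eq_sub_of_hasDerivAt hder
    ((continuous_exp.comp (continuous_const.mul continuous_id)).intervalIntegrable 0 t₀)]
  simp [sub_div]

/-- Step 1: slice the pi measure along the first coordinate. -/
lemma step1 (n : ℕ) (w : Fin (n+2) → ℝ) (V : ℝ) :
    (Measure.pi fun _ : Fin (n+2) => expMeasure 1) {x | V ≤ ∑ i, w i * x i}
      = ∫⁻ t, (Measure.pi fun _ : Fin (n+1) => expMeasure 1)
          {y | V - w 0 * t ≤ ∑ j, w j.succ * y j} ∂(expMeasure 1) := by
  have hS := measurableSet_tail w V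
  have hmp := measurePreserving_piFinSuccAbove (fun _ : Fin (n+2) => expMeasure 1) 0
  set e := MeasurableEquiv.piFinSuccAbove (fun _ : Fin (n+2) => ℝ) 0 with he
  have hpre : (Measure.pi fun _ : Fin (n+2) => expMeasure 1) {x | V ≤ ∑ i, w i * x i}
      = ((expMeasure 1).prod (Measure.pi fun _ : Fin (n+1) => expMeasure 1))
          {p : ℝ × (Fin (n+1) → ℝ) | V - w 0 * p.1 ≤ ∑ j, w j.succ * p.2 j} := by
    rw [← (hmp.symm e).measure_preimage hS.nullMeasurableSet]
    congr 1
    ext p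
    simp only [Set.mem_preimage, Set.mem_setOf_eq]
    rw [Fin.sum_univ_succAbove (fun i => w i * (e.symm p) i) 0]
    have h0 : (e.symm p) 0 = p.1 := by
      simp [he, MeasurableEquiv.piFinSuccAbove_symm_apply]
    have hsucc : ∀ j : Fin (n+1), (e.symm p) ((0 : Fin (n+2)).succAbove j) = p.2 j := by
      intro j
      simp [he, MeasurableEquiv.piFinSuccAbove_symm_apply]
    rw [h0]
    simp only [hsucc, Fin.succAbove_zero]
    rw [sub_le_iff_le_add']
    exact Iff.rfl
  rw [hpre, Measure.prod_apply]
  · rfl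
  · exact measurableSet_le (measurable_const.sub (measurable_fst.const_mul (w 0)))
      (Finset.measurable_sum _ fun j _ => ((measurable_pi_apply j).comp measurable_snd).const_mul _)

/-- Integrability of the sliced integrand. -/
lemma integrable_H (F : ℝ → ℝ) (M c₀ : ℝ) (hFmeas : Measurable F)
    (hF0 : ∀ u, 0 ≤ F u) (hFle : ∀ u, F u ≤ M) (V : ℝ) :
    IntegrableOn (fun t => Real.exp (-t) * F (V - c₀ * t)) (Ioi 0) := by
  have haff : Measurable fun t : ℝ => V - c₀ * t :=
    measurable_const.sub (measurable_id.const_mul c₀)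
  have hbase : IntegrableOn (fun t => M * Real.exp (-t)) (Ioi (0:ℝ)) := by
    simpa [IntegrableOn] using ((exp_neg_integrableOn_Ioi 0 one_pos).const_mul M)
  refine Integrable.mono hbase ?_ ?_
  · exact ((measurable_exp.comp measurable_neg).mul (hFmeas.comp haff)).aestronglyMeasurable
  · refine Filter.Eventually.of_forall fun t => ?_
    have h1 : 0 ≤ Real.exp (-t) * F (V - c₀ * t) := mul_nonneg (exp_nonneg _) (hF0 _)
    have hM : 0 ≤ M := (hF0 0).trans (hFle 0)
    rw [Real.norm_eq_abs, Real.norm_eq_abs, abs_of_nonneg h1,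
      abs_of_nonneg (mul_nonneg hM (exp_nonneg _)), mul_comm M]
    exact mul_le_mul_of_nonneg_left (hFle _) (exp_nonneg _)

/-- Step 2: convert the exponential-measure lintegral to a real Lebesgue integral. -/
lemma step2 (F : ℝ → ℝ) (M c₀ : ℝ) (hFmeas : Measurable F)
    (hF0 : ∀ u, 0 ≤ F u) (hFle : ∀ u, F u ≤ M) (V : ℝ) :
    ∫⁻ t, ENNReal.ofReal (F (V - c₀ * t)) ∂(expMeasure 1)
      = ENNReal.ofReal (∫ t in Ioi 0, Real.exp (-t) * F (V - c₀ * t)) := by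
  have hpdf : Measurable (exponentialPDF 1) :=
    (measurable_exponentialPDFReal 1).ennreal_ofReal
  have haff : Measurable fun t : ℝ => V - c₀ * t :=
    measurable_const.sub (measurable_id.const_mul c₀)
  have hg : Measurable fun t => ENNReal.ofReal (F (V - c₀ * t)) :=
    (hFmeas.comp haff).ennreal_ofReal
  rw [show expMeasure 1 = volume.withDensity (exponentialPDF 1) from rfl,
    lintegral_withDensity_eq_lintegral_mul _ hpdf hg]
  have hcompl : ∫⁻ t in (Ioi (0:ℝ))ᶜ,
      (exponentialPDF 1 * fun t => ENNReal.ofReal (F (V - c₀ * t))) t = 0 := by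
    rw [compl_Ioi]
    rw [setLIntegral_congr (Iio_ae_eq_Iic (a := (0:ℝ))).symm]
    rw [setLIntegral_congr_fun (g := fun _ => (0:ℝ≥0∞)) measurableSet_Iio
      (fun t (ht : t < 0) => by
        simp [exponentialPDF_of_neg ht]), lintegral_zero]
  rw [← lintegral_add_compl (μ := volume)
    (exponentialPDF 1 * fun t => ENNReal.ofReal (F (V - c₀ * t))) measurableSet_Ioi,
    hcompl, add_zero]
  have heq : ∀ t ∈ Ioi (0:ℝ),
      (exponentialPDF 1 * fun t => ENNReal.ofReal (F (V - c₀ * t))) t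
        = ENNReal.ofReal (Real.exp (-t) * F (V - c₀ * t)) := by
    intro t ht
    have hpdft : exponentialPDF 1 t = ENNReal.ofReal (Real.exp (-t)) := by
      rw [exponentialPDF_of_nonneg (le_of_lt ht)]; norm_num
    simp only [Pi.mul_apply, hpdft]
    rw [← ENNReal.ofReal_mul (exp_nonneg _)]
  rw [setLIntegral_congr_fun measurableSet_Ioi heq]
  rw [← ofReal_integral_eq_lintegral_ofReal (integrable_H F M c₀ hFmeas hF0 hFle V)
    (Filter.Eventually.of_forall fun t => mul_nonneg (exp_nonneg _) (hF0 _))]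

/-- Step 3: compute the real integral. -/
lemma step3 (n : ℕ) (w : Fin (n+2) → ℝ) (hw : ∀ i, 0 < w i) (hinj : Function.Injective w)
    (V : ℝ) (hV : 0 ≤ V)
    (F : ℝ → ℝ)
    (hF : F = fun u => if 0 ≤ u then
      (∑ i : Fin (n+1), w i.succ ^ n * Real.exp (-u / w i.succ)
        / ∏ j ∈ Finset.univ.erase i, (w i.succ - w j.succ)) else 1)
    (hHint : IntegrableOn (fun t => Real.exp (-t) * F (V - w 0 * t)) (Ioi 0)) :
    ∫ t in Ioi 0, Real.exp (-t) * F (V - w 0 * t)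
      = ∑ i : Fin (n+2), w i ^ (n+1) * Real.exp (-V / w i)
          / ∏ j ∈ Finset.univ.erase i, (w i - w j) := by
  have hw0 : (0:ℝ) < w 0 := hw 0
  have hwne : ∀ i : Fin (n+1), w i.succ ≠ w 0 := fun i h => Fin.succ_ne_zero i (hinj h)
  have hwnz : ∀ i : Fin (n+2), w i ≠ 0 := fun i => (hw i).ne'
  set c : Fin (n+1) → ℝ :=
    fun i => w i.succ ^ n / ∏ j ∈ Finset.univ.erase i, (w i.succ - w j.succ) with hc
  set d : Fin (n+1) → ℝ := fun i => c i * (w i.succ / (w i.succ - w 0)) with hd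
  set b : Fin (n+1) → ℝ := fun i => (w 0 - w i.succ) / w i.succ with hb
  have hbne : ∀ i, b i ≠ 0 := by
    intro i
    exact div_ne_zero (sub_ne_zero.mpr fun h => hwne i h.symm) (hwnz i.succ)
  set t₀ : ℝ := V / w 0 with ht₀
  have ht₀0 : 0 ≤ t₀ := div_nonneg hV hw0.le
  have hwt₀ : w 0 * t₀ = V := by rw [ht₀]; field_simp
  have hsplit : (Ioi (0:ℝ)) = Ioc 0 t₀ ∪ Ioi t₀ := (Ioc_union_Ioi_eq_Ioi ht₀0).symm
  have hint1 : IntegrableOn (fun t => Real.exp (-t) * F (V - w 0 * t)) (Ioc 0 t₀) :=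
    hHint.mono_set (by rw [hsplit]; exact subset_union_left)
  have hint2 : IntegrableOn (fun t => Real.exp (-t) * F (V - w 0 * t)) (Ioi t₀) :=
    hHint.mono_set (by rw [hsplit]; exact subset_union_right)
  rw [hsplit, setIntegral_union (Ioc_disjoint_Ioi le_rfl) measurableSet_Ioi hint1 hint2]
  have h2 : ∫ t in Ioi t₀, Real.exp (-t) * F (V - w 0 * t) = Real.exp (-V / w 0) := by
    have hcong : ∀ t ∈ Ioi t₀, Real.exp (-t) * F (V - w 0 * t) = Real.exp (-t) := by
      intro t ht
      have hVlt : V - w 0 * t < 0 := by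
        have := (div_lt_iff₀ hw0).mp (show V / w 0 < t from ht)
        linarith [this]
      rw [hF]
      simp [not_le.mpr hVlt]
    rw [setIntegral_congr_fun measurableSet_Ioi hcong, integral_exp_neg_Ioi, ht₀, neg_div]
  have h1 : ∫ t in Ioc 0 t₀, Real.exp (-t) * F (V - w 0 * t)
      = ∑ i : Fin (n+1), (d i * Real.exp (-V / w i.succ) - d i * Real.exp (-V / w 0)) := by
    have hcong : ∀ t ∈ Ioc 0 t₀, Real.exp (-t) * F (V - w 0 * t)
        = ∑ i : Fin (n+1), (c i * Real.exp (-V / w i.succ)) * Real.exp (b i * t) := by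
      intro t ht
      have hnn : 0 ≤ V - w 0 * t := by
        have := mul_le_mul_of_nonneg_left ht.2 hw0.le
        rw [hwt₀] at this
        linarith [this]
      rw [hF]
      simp only [if_pos hnn]
      rw [Finset.mul_sum]
      refine Finset.sum_congr rfl fun i _ => ?_
      have hexp : Real.exp (-t) * Real.exp (-(V - w 0 * t) / w i.succ)
          = Real.exp (-V / w i.succ) * Real.exp (b i * t) := by
        rw [← Real.exp_add, ← Real.exp_add]
        congr 1
        rw [hb]
        field_simp [hwnz i.succ]
        ring
      calc Real.exp (-t) * (w i.succ ^ n * Real.exp (-(V - w 0 * t) / w i.succ)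
            / ∏ j ∈ Finset.univ.erase i, (w i.succ - w j.succ))
          = c i * (Real.exp (-t) * Real.exp (-(V - w 0 * t) / w i.succ)) := by
            rw [hc]; ring
        _ = c i * Real.exp (-V / w i.succ) * Real.exp (b i * t) := by rw [hexp]; ring
    rw [setIntegral_congr_fun measurableSet_Ioc hcong,
      ← intervalIntegral.integral_of_le ht₀0]
    rw [intervalIntegral.integral_finset_sum (fun i _ =>
      Continuous.intervalIntegrable (by fun_prop) 0 t₀)]
    refine Finset.sum_congr rfl fun i _ => ?_
    rw [intervalIntegral.integral_const_mul, expint t₀ (b i) (hbne i)]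
    have hbt : Real.exp (-V / w i.succ) * Real.exp (b i * t₀) = Real.exp (-V / w 0) := by
      rw [← Real.exp_add]
      congr 1
      rw [hb, ht₀]
      field_simp [hwnz i.succ, hw0.ne']
      ring
    have hE : Real.exp (b i * t₀)
        = Real.exp (-V / w 0) / Real.exp (-V / w i.succ) := by
      rw [← hbt]
      field_simp
    rw [hE, hd, hb]
    have hEne : Real.exp (-V / w i.succ) ≠ 0 := (exp_pos _).ne'
    have hne1 : w i.succ - w 0 ≠ 0 := sub_ne_zero.mpr (hwne i)
    have hne2 : w 0 - w i.succ ≠ 0 := sub_ne_zero.mpr fun h => hwne i h.symm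
    field_simp
    ring
  rw [h1, h2]
  have hdsucc : ∀ i : Fin (n+1),
      w i.succ ^ (n+1) / ∏ j ∈ Finset.univ.erase i.succ, (w i.succ - w j) = d i := by
    intro i
    rw [prod_erase_succ (fun j => w i.succ - w j) i, hd, hc]
    have hP : (∏ j ∈ Finset.univ.erase i, (w i.succ - w j.succ)) ≠ 0 := by
      rw [Finset.prod_ne_zero_iff]
      intro j hj
      refine sub_ne_zero.mpr fun h => (Finset.mem_erase.mp hj).1 ?_
      exact (Fin.succ_injective _ (hinj h)).symm
    have hne1 : w i.succ - w 0 ≠ 0 := sub_ne_zero.mpr (hwne i)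
    simp only [hd, hc]
    rw [pow_succ, div_mul_div_comm,
      mul_comm (∏ j ∈ Finset.univ.erase i, (w i.succ - w j.succ)) (w i.succ - w 0)]
  have hlag := lagrange_identity (n := n+1) w hinj
  rw [Fin.sum_univ_succ] at hlag
  rw [Finset.sum_congr rfl (fun i _ => hdsucc i)] at hlag
  have htsucc : ∀ i : Fin (n+1),
      w i.succ ^ (n+1) * Real.exp (-V / w i.succ)
        / ∏ j ∈ Finset.univ.erase i.succ, (w i.succ - w j)
      = d i * Real.exp (-V / w i.succ) := by
    intro i
    rw [← hdsucc i]
    ring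
  have hA0 : w 0 ^ (n+1) / ∏ j ∈ Finset.univ.erase 0, (w 0 - w j)
      = 1 - ∑ i : Fin (n+1), d i := by linarith [hlag]
  have hA0' : w 0 ^ (n+1) * Real.exp (-V / w 0) / ∏ j ∈ Finset.univ.erase 0, (w 0 - w j)
      = (1 - ∑ i : Fin (n+1), d i) * Real.exp (-V / w 0) := by
    rw [← hA0]; ring
  have hT : (∑ i : Fin (n+2), w i ^ (n+1) * Real.exp (-V / w i)
        / ∏ j ∈ Finset.univ.erase i, (w i - w j))
      = w 0 ^ (n+1) * Real.exp (-V / w 0) / ∏ j ∈ Finset.univ.erase 0, (w 0 - w j)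
        + ∑ i : Fin (n+1), d i * Real.exp (-V / w i.succ) := by
    rw [Fin.sum_univ_succ]
    congr 1
    exact Finset.sum_congr rfl fun i _ => htsucc i
  rw [hT, hA0', Finset.sum_sub_distrib, ← Finset.sum_mul]
  ring

lemma key : ∀ n : ℕ, ∀ w : Fin (n+1) → ℝ, (∀ i, 0 < w i) → Function.Injective w →
    ∀ V : ℝ, 0 ≤ V →
    0 ≤ (∑ i, w i ^ n * Real.exp (-V / w i) / ∏ j ∈ Finset.univ.erase i, (w i - w j)) ∧
    (Measure.pi fun _ : Fin (n+1) => expMeasure 1) {x | V ≤ ∑ i, w i * x i}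
      = ENNReal.ofReal
          (∑ i, w i ^ n * Real.exp (-V / w i) / ∏ j ∈ Finset.univ.erase i, (w i - w j)) := by
  intro n
  induction n with
  | zero =>
    intro w hw _ V hV
    have hform : (∑ i, w i ^ 0 * Real.exp (-V / w i) / ∏ j ∈ Finset.univ.erase i, (w i - w j))
        = Real.exp (-(V / w 0)) := by
      simp [Fin.sum_univ_one, neg_div]
    rw [hform]
    refine ⟨(exp_pos _).le, ?_⟩
    have hmp := (measurePreserving_funUnique (expMeasure 1) (Fin 1)).symm
      (MeasurableEquiv.funUnique (Fin 1) ℝ)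
    have hS := measurableSet_tail w V
    refine (hmp.measure_preimage hS.nullMeasurableSet).symm.trans ?_
    have hset : (MeasurableEquiv.funUnique (Fin 1) ℝ).symm ⁻¹' {x | V ≤ ∑ i, w i * x i}
        = Set.Ici (V / w 0) := by
      ext t
      simp only [Set.mem_preimage, Set.mem_setOf_eq, Set.mem_Ici,
        MeasurableEquiv.funUnique_symm_apply, Fin.sum_univ_succ, Finset.univ_eq_empty,
        Finset.sum_empty, add_zero, uniqueElim_const]
      rw [div_le_iff₀ (hw 0), mul_comm]
    rw [hset, expMeasure_Ici (div_nonneg hV (hw 0).le)]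
  | succ n IH =>
    intro w hw hinj V hV
    have hw0 : (0:ℝ) < w 0 := hw 0
    set G : ℝ → ℝ := fun u => ∑ i : Fin (n+1), w i.succ ^ n * Real.exp (-u / w i.succ)
        / ∏ j ∈ Finset.univ.erase i, (w i.succ - w j.succ) with hGdef
    set F : ℝ → ℝ := fun u => if 0 ≤ u then G u else 1 with hFdef
    have hw'pos : ∀ j : Fin (n+1), 0 < (fun j : Fin (n+1) => w j.succ) j := fun j => hw _
    have hw'inj : Function.Injective (fun j : Fin (n+1) => w j.succ) :=
      fun a b h => Fin.succ_injective _ (hinj h)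
    have hIH := fun (u : ℝ) (hu : 0 ≤ u) => IH (fun j => w j.succ) hw'pos hw'inj u hu
    have hF0 : ∀ u, 0 ≤ F u := by
      intro u
      rw [hFdef]
      by_cases hu : 0 ≤ u
      · simp only [if_pos hu]
        exact (hIH u hu).1
      · simp only [if_neg hu]
        norm_num
    set M : ℝ := 1 + ∑ i : Fin (n+1),
        |w i.succ ^ n / ∏ j ∈ Finset.univ.erase i, (w i.succ - w j.succ)| with hM
    have habs0 : 0 ≤ ∑ i : Fin (n+1),
        |w i.succ ^ n / ∏ j ∈ Finset.univ.erase i, (w i.succ - w j.succ)| :=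
      Finset.sum_nonneg fun i _ => abs_nonneg _
    have hFle : ∀ u, F u ≤ M := by
      intro u
      rw [hFdef]
      by_cases hu : 0 ≤ u
      · simp only [if_pos hu]
        have hle : G u ≤ ∑ i : Fin (n+1),
            |w i.succ ^ n / ∏ j ∈ Finset.univ.erase i, (w i.succ - w j.succ)| := by
          rw [hGdef]
          refine Finset.sum_le_sum fun i _ => ?_
          have hexple : Real.exp (-u / w i.succ) ≤ 1 := by
            rw [show (1:ℝ) = Real.exp 0 from (Real.exp_zero).symm]
            exact Real.exp_le_exp.mpr (div_nonpos_of_nonpos_of_nonneg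
              (neg_nonpos.mpr hu) (hw _).le)
          calc w i.succ ^ n * Real.exp (-u / w i.succ)
                / ∏ j ∈ Finset.univ.erase i, (w i.succ - w j.succ)
              = (w i.succ ^ n / ∏ j ∈ Finset.univ.erase i, (w i.succ - w j.succ))
                  * Real.exp (-u / w i.succ) := by ring
            _ ≤ |w i.succ ^ n / ∏ j ∈ Finset.univ.erase i, (w i.succ - w j.succ)|
                  * Real.exp (-u / w i.succ) :=
                mul_le_mul_of_nonneg_right (le_abs_self _) (exp_nonneg _)
            _ ≤ |w i.succ ^ n / ∏ j ∈ Finset.univ.erase i, (w i.succ - w j.succ)| * 1 :=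
                mul_le_mul_of_nonneg_left hexple (abs_nonneg _)
            _ = _ := mul_one _
        rw [hM]
        linarith [hle]
      · simp only [if_neg hu]
        rw [hM]
        linarith [habs0]
    have hGmeas : Measurable G := by
      rw [hGdef]
      exact Finset.measurable_sum _ fun i _ =>
        (((measurable_id.neg.div_const _).exp).const_mul _).div_const _
    have hFmeas : Measurable F := by
      rw [hFdef]
      exact Measurable.ite (measurableSet_le measurable_const measurable_id)
        hGmeas measurable_const
    have hslice : ∀ t : ℝ, (Measure.pi fun _ : Fin (n+1) => expMeasure 1)
        {y | V - w 0 * t ≤ ∑ j, w j.succ * y j} = ENNReal.ofReal (F (V - w 0 * t)) := by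
      intro t
      by_cases hge : 0 ≤ V - w 0 * t
      · have h := (hIH _ hge).2
        rw [hFdef]
        simp only [if_pos hge]
        exact h
      · have h := tail_nonpos (fun j : Fin (n+1) => w j.succ) (fun j => (hw _).le)
          (le_of_not_ge hge)
        rw [hFdef]
        simp only [if_neg hge, ENNReal.ofReal_one]
        exact h
    have hmain : (Measure.pi fun _ : Fin (n+1+1) => expMeasure 1) {x | V ≤ ∑ i, w i * x i}
        = ENNReal.ofReal (∫ t in Ioi 0, Real.exp (-t) * F (V - w 0 * t)) := by
      rw [step1 n w V]
      rw [lintegral_congr hslice]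
      exact step2 F M (w 0) hFmeas hF0 hFle V
    have hI : ∫ t in Ioi 0, Real.exp (-t) * F (V - w 0 * t)
        = ∑ i : Fin (n+2), w i ^ (n+1) * Real.exp (-V / w i)
            / ∏ j ∈ Finset.univ.erase i, (w i - w j) :=
      step3 n w hw hinj V hV F hFdef (integrable_H F M (w 0) hFmeas hF0 hFle V)
    constructor
    · rw [← hI]
      exact setIntegral_nonneg measurableSet_Ioi fun t _ =>
        mul_nonneg (exp_nonneg _) (hF0 _)
    · rw [hmain, hI]

end WSE

/-- Theorem 3.3: the right-tail probability of the weighted sum of independent rate-1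
exponentials with pairwise distinct positive weights. -/
theorem tail_weighted_sum_exponential_distinct {Ω : Type*} [MeasurableSpace Ω]
    (μ : Measure Ω) [IsProbabilityMeasure μ] (k : ℕ) (hk : 1 ≤ k)
    (X : Fin k → Ω → ℝ) (hXm : ∀ i, Measurable (X i))
    (hindep : iIndepFun X μ)
    (hlaw : ∀ i, μ.map (X i) = expMeasure 1)
    (w : Fin k → ℝ) (hw : ∀ i, 0 < w i) (hinj : Function.Injective w)
    (V : ℝ) (hV : 0 ≤ V) :
    (μ {ω | V ≤ ∑ i, w i * X i ω}).toReal
      = ∑ i, w i ^ (k - 1) * Real.exp (-V / w i)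
          / ∏ j ∈ Finset.univ.erase i, (w i - w j) := by
  have hT : Measurable (fun ω i => X i ω) := measurable_pi_lambda _ hXm
  haveI : IsProbabilityMeasure (expMeasure 1) := isProbabilityMeasure_expMeasure one_pos
  have hmap : μ.map (fun ω i => X i ω) = Measure.pi fun _ : Fin k => expMeasure 1 := by
    refine (Measure.pi_eq fun s hs => ?_).symm
    rw [Measure.map_apply hT (MeasurableSet.univ_pi hs)]
    have hpre : (fun ω i => X i ω) ⁻¹' Set.pi Set.univ s
        = ⋂ i ∈ Finset.univ, X i ⁻¹' s i := by
      ext ω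
      simp [Set.mem_pi]
    rw [hpre, hindep.measure_inter_preimage_eq_mul Finset.univ (fun i _ => hs i)]
    exact Finset.prod_congr rfl fun i _ => by
      rw [← Measure.map_apply (hXm i) (hs i), hlaw i]
  obtain ⟨n, rfl⟩ : ∃ n, k = n + 1 := ⟨k - 1, (Nat.succ_pred_eq_of_pos hk).symm⟩
  have hset : {ω | V ≤ ∑ i, w i * X i ω}
      = (fun ω i => X i ω) ⁻¹' {x | V ≤ ∑ i, w i * x i} := rfl
  rw [hset, ← Measure.map_apply hT (WSE.measurableSet_tail w V), hmap,
    (WSE.key n w hw hinj V hV).2, ENNReal.toReal_ofReal (WSE.key n w hw hinj V hV).1]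
  simp only [Nat.add_sub_cancel]
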